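/- Let {X_e : e ∈ T_k} be i.i.d. random variables with |T_k| ≤ 2^{2k+1} whose negative parts satisfy P(X_e^- > x) = e^{−x²f(x)} for x ≥ M₀, with f positive increasing. Let V_k^- = Σ_{e∈T_k} X_e^- and B_k(v) = {2^{−k}V_k^- ∈ [2^{N−v}, 2^{N−v+1})}. Then there exists a universal positive constant C so that for any integer v with M := 2^{N−k−v−2} ≥ M₀ (and M sufficiently large that M²f(M)² > 2f(M)), one has P(B_k(v)) ≤ e^{−C·2^{2(N−v)}·f(M)}. -/

import Mathlib

open MeasureTheory ProbabilityTheory Filter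

namespace Stmt17

/-- `V_k^- = Σ_{e ∈ T_k} X_e^-`. -/
noncomputable def Vneg {E : Type} (T : ℕ → Finset E) (X : E → Ω → ℝ) (k : ℕ) (ω : Ω) : ℝ :=
  ∑ e ∈ T k, max (-(X e ω)) 0

/-- The event `B_k(v) = {2^{-k} V_k^- ∈ [2^{N-v}, 2^{N-v+1})}`. -/
def Bevent {E : Type} (T : ℕ → Finset E) (X : E → Ω → ℝ) (N k v : ℕ) : Set Ω :=
  {ω | (2 : ℝ) ^ (-(k : ℤ)) * Vneg T X k ω ∈
    Set.Ico ((2 : ℝ) ^ ((N : ℤ) - (v : ℤ))) ((2 : ℝ) ^ ((N : ℤ) - (v : ℤ) + 1))}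

end Stmt17

open Stmt17

open Finset Real

/-! On `B_k(v)` the sum `V = ∑ₑ Xₑ⁻` is at least `2 s M` with `s = 2^{2k+1} ≥ |T_k|` and
`M = 2^{N-k-v-2}`. Either some `Xₑ⁻` exceeds `M + s M`, which by a union bound has probability
at most `|T_k| e^{-s² M² f(M)}`, or the truncated excesses `Zₑ = min ((Xₑ⁻ - M)⁺, s M)` sum to at
least `s M`. The tail `e^{-x² f(x)}` gives `E e^{M f(M) Zₑ} ≤ 2`, so Chernoff's bound makes the
second event cost at most `2^{|T_k|} e^{-s M² f(M)}`. Both terms are at most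
`e^{-s M² f(M) / 4} / 2`, which is the claim with `C = 1/32`. -/

theorem exp_le_one_add_sum_range_ite (x : ℝ) (J : ℕ) (hx : 0 ≤ x) (hxJ : x ≤ J) :
    exp x ≤ 1 + ∑ j ∈ range J, if (j : ℝ) < x then exp (j + 1) else 0 := by
  have hterms : ∀ j ∈ range J, 0 ≤ if (j : ℝ) < x then exp (j + 1) else 0 :=
    fun j _ => by split_ifs <;> positivity
  rcases hx.eq_or_lt with rfl | hx
  · simpa using sum_nonneg hterms
  -- the term `j = ⌈x⌉₊ - 1` alone dominates `exp x`
  obtain ⟨j, hj⟩ : ∃ j : ℕ, j + 1 = ⌈x⌉₊ := ⟨⌈x⌉₊ - 1, by have := Nat.ceil_pos.2 hx; omega⟩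
  have hjx : (j : ℝ) < x := by
    have := Nat.ceil_lt_add_one hx.le
    rw [← hj] at this; push_cast at this; linarith
  have hxj : x ≤ j + 1 := by
    have := Nat.le_ceil x
    rw [← hj] at this; push_cast at this; linarith
  have hjJ : j ∈ range J := mem_range.2 (by have := Nat.ceil_le.2 hxJ; omega)
  calc exp x ≤ exp (j + 1) := exp_le_exp.2 hxj
    _ = if (j : ℝ) < x then exp (j + 1) else 0 := (if_pos hjx).symm
    _ ≤ ∑ j ∈ range J, if (j : ℝ) < x then exp (j + 1) else 0 := single_le_sum hterms hjJ
    _ ≤ _ := le_add_of_nonneg_left zero_le_one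

theorem sum_range_exp_neg_succ_le_one (J : ℕ) : ∑ j ∈ range J, exp (-(j + 1)) ≤ 1 := by
  have he : exp (-1) ≤ 1 / 2 := by
    rw [exp_neg, one_div]
    exact inv_anti₀ two_pos (by linarith [add_one_le_exp 1])
  calc ∑ j ∈ range J, exp (-(j + 1)) = ∑ j ∈ range J, exp (-1) ^ (j + 1) := by
        refine sum_congr rfl fun j _ => ?_
        rw [← exp_nat_mul]; push_cast; ring_nf
    _ ≤ ∑ j ∈ range J, (1 / 2) ^ (j + 1) := by gcongr
    _ = 1 / 2 * ∑ j ∈ range J, (1 / 2 : ℝ) ^ j := by rw [mul_sum]; simp_rw [pow_succ']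
    _ ≤ 1 := by linarith [sum_geometric_two_le J]

theorem le_sum_min_max_sub_of_two_mul_le {ι : Type*} (T : Finset ι) (y : ι → ℝ) {M t : ℝ}
    (hTM : #T * M ≤ t) (hsum : 2 * t ≤ ∑ i ∈ T, y i) (hy : ∀ i ∈ T, y i ≤ M + t) :
    t ≤ ∑ i ∈ T, min (max (y i - M) 0) t := by
  have hle : ∑ i ∈ T, (y i - M) ≤ ∑ i ∈ T, min (max (y i - M) 0) t :=
    sum_le_sum fun i hi => le_min (le_max_left _ _) (by linarith [hy i hi])
  rw [sum_sub_distrib, sum_const, nsmul_eq_mul] at hle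
  linarith

theorem two_pow_mul_exp_add_mul_exp_le {n : ℕ} {s u : ℝ} (hs : 2 ≤ s) (hu : 2 ≤ u)
    (hn : (n : ℝ) ≤ s) :
    2 ^ n * exp (-(s * u)) + n * exp (-(s ^ 2 * u)) ≤ exp (-(s * u / 4)) := by
  have hsu : 2 * s ≤ s * u := by nlinarith
  have h2e : (2 : ℝ) ≤ exp 1 := by linarith [add_one_le_exp 1]
  have hfirst : 2 * (2 ^ n * exp (-(s * u))) ≤ exp (-(s * u / 4)) :=
    calc 2 * (2 ^ n * exp (-(s * u))) ≤ exp 1 * (exp 1 ^ n * exp (-(s * u))) := by gcongr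
      _ = exp (n + 1 - s * u) := by rw [exp_one_pow, ← exp_add, ← exp_add]; ring_nf
      _ ≤ exp (-(s * u / 4)) := exp_le_exp.2 (by linarith)
  have hsecond : 2 * (n * exp (-(s ^ 2 * u))) ≤ exp (-(s * u / 4)) := by
    have hbig : 2 * s ≤ exp (s ^ 2 * u - s * u / 4) := by
      have := add_one_le_exp (s ^ 2 * u - s * u / 4)
      nlinarith
    calc 2 * (n * exp (-(s ^ 2 * u))) ≤ 2 * s * exp (-(s ^ 2 * u)) := by
          rw [mul_assoc]; gcongr
      _ ≤ exp (s ^ 2 * u - s * u / 4) * exp (-(s ^ 2 * u)) := by gcongr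
      _ = exp (-(s * u / 4)) := by rw [← exp_add]; ring_nf
  linarith

section

variable {Ω : Type*} [MeasurableSpace Ω] {P : Measure Ω} [IsProbabilityMeasure P]

theorem mgf_le_two_of_measureReal_lt_le {Z : Ω → ℝ} {t b : ℝ} (hZ : Measurable Z) (ht : 0 ≤ t)
    (hZ0 : ∀ ω, 0 ≤ Z ω) (hZb : ∀ ω, Z ω ≤ b)
    (htail : ∀ j : ℕ, P.real {ω | j < t * Z ω} ≤ exp (-(2 * (j + 1)))) :
    mgf Z P t ≤ 2 := by
  set J := ⌈t * b⌉₊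
  set S : ℕ → Set Ω := fun j => {ω | j < t * Z ω}
  have hS : ∀ j, MeasurableSet (S j) := fun j => measurableSet_lt measurable_const (by fun_prop)
  have hint : ∀ j, Integrable ((S j).indicator fun _ => exp (j + 1)) P :=
    fun j => (integrable_const _).indicator (hS j)
  have hpt : ∀ ω,
      exp (t * Z ω) ≤ 1 + ∑ j ∈ range J, (S j).indicator (fun _ => exp (j + 1)) ω := by
    intro ω
    simp only [S, Set.indicator_apply, Set.mem_ofPred_eq]
    exact exp_le_one_add_sum_range_ite _ J (mul_nonneg ht (hZ0 ω))
      ((mul_le_mul_of_nonneg_left (hZb ω) ht).trans (Nat.le_ceil _))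
  calc mgf Z P t ≤ ∫ ω, 1 + ∑ j ∈ range J, (S j).indicator (fun _ => exp (j + 1)) ω ∂P :=
        integral_mono (integrable_exp_mul_of_le t b ht hZ.aemeasurable (.of_forall hZb))
          ((integrable_const 1).add (integrable_finsetSum _ fun j _ => hint j)) hpt
    _ = 1 + ∑ j ∈ range J, P.real (S j) * exp (j + 1) := by
        rw [integral_add (integrable_const 1) (integrable_finsetSum _ fun j _ => hint j),
          integral_finsetSum _ fun j _ => hint j]
        simp [integral_indicator_const _ (hS _)]
    _ ≤ 1 + ∑ j ∈ range J, exp (-(j + 1)) := by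
        gcongr with j
        calc P.real (S j) * exp (j + 1) ≤ exp (-(2 * (j + 1))) * exp (j + 1) := by
              gcongr; exact htail j
          _ = exp (-(j + 1)) := by rw [← exp_add]; ring_nf
    _ ≤ 2 := by linarith [sum_range_exp_neg_succ_le_one J]

theorem mgf_min_max_sub_le_two {Y : Ω → ℝ} (hY : Measurable Y) {M c t : ℝ} (hM : 0 < M)
    (ht : 0 ≤ t) (hu : 2 ≤ M ^ 2 * c)
    (htail : ∀ x, M ≤ x → P.real {ω | x < Y ω} ≤ exp (-(x ^ 2 * c))) :
    mgf (fun ω => min (max (Y ω - M) 0) t) P (M * c) ≤ 2 := by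
  have hc : 0 < c := pos_of_mul_pos_right (by linarith) (sq_nonneg M)
  have hMc : 0 < M * c := mul_pos hM hc
  refine mgf_le_two_of_measureReal_lt_le (b := t) (by fun_prop) hMc.le
    (fun ω => le_min (le_max_right _ _) ht) (fun ω => min_le_right _ _) fun j => ?_
  -- `M * c * Z > j` forces `Y > M + j / (M * c)`, and `(M + j / (M c))² c ≥ M² c + 2 j`
  set q : ℝ := j / (M * c)
  have hq : 0 ≤ q := by positivity
  have hqMc : M * q * c = j := by
    simp only [q]; field_simp
  have hsub : {ω | (j : ℝ) < M * c * min (max (Y ω - M) 0) t} ⊆ {ω | M + q < Y ω} := by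
    intro ω hω
    have hlt : q < min (max (Y ω - M) 0) t := (div_lt_iff₀' hMc).2 hω
    have : q < Y ω - M := by
      rcases lt_max_iff.1 (hlt.trans_le (min_le_left _ _)) with h | h
      · exact h
      · linarith
    simp only [Set.mem_ofPred_eq]
    linarith
  calc P.real {ω | (j : ℝ) < M * c * min (max (Y ω - M) 0) t}
      ≤ P.real {ω | M + q < Y ω} := measureReal_mono hsub
    _ ≤ exp (-((M + q) ^ 2 * c)) := htail _ (by linarith)
    _ ≤ exp (-(2 * (j + 1))) := exp_le_exp.2 (by nlinarith [mul_nonneg (sq_nonneg q) hc.le])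

theorem ProbabilityTheory.iIndepFun.measureReal_le_sum_le_exp_mul_pow {ι : Type*}
    {X : ι → Ω → ℝ} (hindep : iIndepFun X P) (hX : ∀ i, Measurable (X i)) (T : Finset ι)
    {t m ε : ℝ} (ht : 0 ≤ t)
    (hint : ∀ i ∈ T, Integrable (fun ω => exp (t * X i ω)) P)
    (hmgf : ∀ i ∈ T, mgf (X i) P t ≤ m) :
    P.real {ω | ε ≤ ∑ i ∈ T, X i ω} ≤ exp (-t * ε) * m ^ #T := by
  have h := measure_ge_le_exp_mul_mgf ε ht (hindep.integrable_exp_mul_sum hX hint)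
  simp only [Finset.sum_apply] at h
  calc _ ≤ exp (-t * ε) * mgf (∑ i ∈ T, X i) P t := h
    _ = exp (-t * ε) * ∏ i ∈ T, mgf (X i) P t := by rw [hindep.mgf_sum hX]
    _ ≤ exp (-t * ε) * ∏ _i ∈ T, m := by
        gcongr with i hi
        exacts [fun _ _ => mgf_nonneg, hmgf i hi]
    _ = exp (-t * ε) * m ^ #T := by rw [prod_const]

theorem measureReal_two_mul_le_sum_le_exp {ι : Type*} (T : Finset ι) {Y : ι → Ω → ℝ}
    (hY : ∀ i, Measurable (Y i)) (hindep : iIndepFun Y P) {M c s : ℝ} (hM : 0 < M)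
    (hu : 2 ≤ M ^ 2 * c) (hs : 2 ≤ s) (hT : (#T : ℝ) ≤ s)
    (htail : ∀ i ∈ T, ∀ x, M ≤ x → P.real {ω | x < Y i ω} ≤ exp (-(x ^ 2 * c))) :
    P.real {ω | 2 * (s * M) ≤ ∑ i ∈ T, Y i ω} ≤ exp (-(s * (M ^ 2 * c) / 4)) := by
  set t := s * M
  have ht : 0 ≤ t := by positivity
  have hc : 0 < c := pos_of_mul_pos_right (by linarith) (sq_nonneg M)
  set Z : ι → Ω → ℝ := fun i ω => min (max (Y i ω - M) 0) t
  have hZ : ∀ i, Measurable (Z i) := fun i => by fun_prop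
  have hsub : {ω | 2 * t ≤ ∑ i ∈ T, Y i ω} ⊆
      {ω | t ≤ ∑ i ∈ T, Z i ω} ∪ ⋃ i ∈ T, {ω | M + t < Y i ω} := by
    intro ω hω
    by_cases hlarge : ∃ i ∈ T, M + t < Y i ω
    · obtain ⟨i, hi, hYi⟩ := hlarge
      exact Or.inr (Set.mem_biUnion hi hYi)
    · push Not at hlarge
      exact Or.inl (le_sum_min_max_sub_of_two_mul_le T (Y · ω)
        (mul_le_mul_of_nonneg_right hT hM.le) hω hlarge)
  have hZindep : iIndepFun Z P :=
    hindep.comp (fun _ y => min (max (y - M) 0) t) fun _ => by fun_prop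
  have hchernoff : P.real {ω | t ≤ ∑ i ∈ T, Z i ω} ≤ exp (-(M * c) * t) * 2 ^ #T :=
    hZindep.measureReal_le_sum_le_exp_mul_pow hZ T (by positivity)
      (fun i _ => integrable_exp_mul_of_le _ t (by positivity) (hZ i).aemeasurable
        (.of_forall fun ω => min_le_right _ _))
      fun i hi => mgf_min_max_sub_le_two (hY i) hM ht hu (htail i hi)
  have hlarge : ∀ i ∈ T, P.real {ω | M + t < Y i ω} ≤ exp (-(s ^ 2 * (M ^ 2 * c))) := by
    intro i hi
    refine (htail i hi _ (by linarith)).trans (exp_le_exp.2 ?_)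
    have : t ^ 2 * c ≤ (M + t) ^ 2 * c := by gcongr; linarith
    linarith [show t ^ 2 * c = s ^ 2 * (M ^ 2 * c) by ring]
  calc P.real {ω | 2 * t ≤ ∑ i ∈ T, Y i ω}
      ≤ P.real {ω | t ≤ ∑ i ∈ T, Z i ω} + ∑ i ∈ T, P.real {ω | M + t < Y i ω} :=
        (measureReal_mono hsub).trans ((measureReal_union_le _ _).trans
          (add_le_add_right (measureReal_biUnion_finset_le _ _) _))
    _ ≤ 2 ^ #T * exp (-(s * (M ^ 2 * c))) + #T * exp (-(s ^ 2 * (M ^ 2 * c))) := by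
        rw [show -(s * (M ^ 2 * c)) = -(M * c) * t by ring, mul_comm (2 ^ #T : ℝ)]
        gcongr
        exact (sum_le_sum hlarge).trans_eq (by rw [sum_const, nsmul_eq_mul])
    _ ≤ exp (-(s * (M ^ 2 * c) / 4)) := two_pow_mul_exp_add_mul_exp_le hs hu hT

end

theorem stmt_17_general
    {Ω : Type} [MeasurableSpace Ω] (P : Measure Ω) [IsProbabilityMeasure P]
    {E : Type} (T : ℕ → Finset E)
    (hcard : ∀ k, (T k).card ≤ 2 ^ (2 * k + 1))
    (X : E → Ω → ℝ)
    (hmeas : ∀ e, Measurable (X e))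
    (hindep : iIndepFun X P)
    (M₀ : ℝ)
    (f : ℝ → ℝ) (hfpos : ∀ x, 0 < f x) (hfmono : Monotone f)
    (htail : ∀ e, ∀ x : ℝ, M₀ ≤ x →
      (P {ω | x < max (-(X e ω)) 0}).toReal = Real.exp (-(x ^ 2 * f x))) :
    ∃ C > (0 : ℝ), ∀ N k v : ℕ,
      M₀ ≤ (2 : ℝ) ^ ((N : ℤ) - (k : ℤ) - (v : ℤ) - 2) →
      2 * f ((2 : ℝ) ^ ((N : ℤ) - (k : ℤ) - (v : ℤ) - 2)) <
        ((2 : ℝ) ^ ((N : ℤ) - (k : ℤ) - (v : ℤ) - 2)) ^ 2 *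
          (f ((2 : ℝ) ^ ((N : ℤ) - (k : ℤ) - (v : ℤ) - 2))) ^ 2 →
      (P (Bevent T X N k v)).toReal ≤
        Real.exp (-(C * (2 : ℝ) ^ (2 * ((N : ℤ) - (v : ℤ))) *
          f ((2 : ℝ) ^ ((N : ℤ) - (k : ℤ) - (v : ℤ) - 2)))) := by
  refine ⟨1 / 32, by norm_num, fun N k v hM₀M hMf => ?_⟩
  set M := (2 : ℝ) ^ ((N : ℤ) - (k : ℤ) - (v : ℤ) - 2) with hM
  set s : ℝ := 2 ^ (2 * k + 1) with hs
  have hu : 2 ≤ M ^ 2 * f M := (lt_of_mul_lt_mul_right (by linarith) (hfpos M).le).le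
  have hsM : 2 * (s * M) = 2 ^ (k : ℤ) * 2 ^ ((N : ℤ) - v) := by
    rw [hs, hM, ← zpow_natCast, ← zpow_add₀ two_ne_zero, ← zpow_one_add₀ two_ne_zero,
      ← zpow_add₀ two_ne_zero]
    congr 1; push_cast; ring
  have hB : Bevent T X N k v ⊆ {ω | 2 * (s * M) ≤ ∑ e ∈ T k, max (-(X e ω)) 0} := by
    intro ω hω
    have := mul_le_mul_of_nonneg_left hω.1 (zpow_pos (two_pos : (0 : ℝ) < 2) k).le
    rwa [zpow_neg, mul_inv_cancel_left₀ (zpow_ne_zero _ two_ne_zero), ← hsM] at this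
  have hscale : (2 : ℝ) ^ (2 * ((N : ℤ) - v)) = 8 * s * M ^ 2 := by
    rw [hs, hM, ← zpow_natCast (2 : ℝ), ← zpow_natCast _ 2, ← zpow_mul,
      show (8 : ℝ) = 2 ^ (3 : ℤ) by norm_num, ← zpow_add₀ two_ne_zero, ← zpow_add₀ two_ne_zero]
    congr 1; push_cast; ring
  calc (P (Bevent T X N k v)).toReal
      ≤ P.real {ω | 2 * (s * M) ≤ ∑ e ∈ T k, max (-(X e ω)) 0} := measureReal_mono hB
    _ ≤ exp (-(s * (M ^ 2 * f M) / 4)) := by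
        refine measureReal_two_mul_le_sum_le_exp (T k) (Y := fun e ω => max (-(X e ω)) 0)
          (fun e => (hmeas e).neg.max measurable_const)
          (hindep.comp (fun _ x => max (-x) 0) fun _ => by fun_prop) (by positivity) hu
          (le_self_pow₀ one_le_two (by omega)) (by rw [hs]; exact_mod_cast hcard k)
          fun e _ x hx => ?_
        rw [measureReal_def, htail e x (hM₀M.trans hx)]
        gcongr
        exact hfmono hx
    _ = _ := by rw [hscale]; ring_nf

/-- Lemma 4.2.  With `{X_e : e ∈ T_k}` i.i.d.,
`|T_k| ≤ 2^{2k+1}` and negative-part tail `P(X_e⁻ > x) = e^{-x² f(x)}` for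
`x ≥ M₀` (`f` positive increasing): there is a universal `C > 0` such that for
any integers `N, k, v` with `M := 2^{N-k-v-2} ≥ M₀` (and `M` large enough that
`M² f(M)² > 2 f(M)`), `P(B_k(v)) ≤ e^{-C 2^{2(N-v)} f(M)}`. -/
theorem stmt_17
    {Ω : Type} [MeasurableSpace Ω] (P : Measure Ω) [IsProbabilityMeasure P]
    {E : Type} (T : ℕ → Finset E)
    (hcard : ∀ k, (T k).card ≤ 2 ^ (2 * k + 1))
    (X : E → Ω → ℝ)
    (hmeas : ∀ e, Measurable (X e))
    (hindep : iIndepFun X P)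
    (hident : ∀ e e', Measure.map (X e) P = Measure.map (X e') P)
    (M₀ : ℝ) (hM₀ : 0 < M₀)
    (f : ℝ → ℝ) (hfpos : ∀ x, 0 < f x) (hfmono : Monotone f)
    (htail : ∀ e, ∀ x : ℝ, M₀ ≤ x →
      (P {ω | x < max (-(X e ω)) 0}).toReal = Real.exp (-(x ^ 2 * f x))) :
    ∃ C > (0 : ℝ), ∀ N k v : ℕ,
      M₀ ≤ (2 : ℝ) ^ ((N : ℤ) - (k : ℤ) - (v : ℤ) - 2) →
      2 * f ((2 : ℝ) ^ ((N : ℤ) - (k : ℤ) - (v : ℤ) - 2)) <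
        ((2 : ℝ) ^ ((N : ℤ) - (k : ℤ) - (v : ℤ) - 2)) ^ 2 *
          (f ((2 : ℝ) ^ ((N : ℤ) - (k : ℤ) - (v : ℤ) - 2))) ^ 2 →
      (P (Bevent T X N k v)).toReal ≤
        Real.exp (-(C * (2 : ℝ) ^ (2 * ((N : ℤ) - (v : ℤ))) *
          f ((2 : ℝ) ^ ((N : ℤ) - (k : ℤ) - (v : ℤ) - 2)))) :=
  stmt_17_general P T hcard X hmeas hindep M₀ f hfpos hfmono htail
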